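/- arXiv:2412.07728 — 3 statements merged into one kernel-verified Lean document; each statement's English description precedes it below -/
import Mathlib

section
/- For k ∈ ℕ, the function u_k(x,y) = (arctan(x/y)/π + 1/2)·Re((x+iy)^k) − (1/π)·log(√(x²+y²))·Im((x+iy)^k) is harmonic on the upper half-plane {(x,y) : y > 0}. -/
/-!
With the principal branch of the logarithm, `u_k = Re F_k` for
`F_k(z) = z^k (1 + (i/π) log z)`: on the upper half-plane `log z = log |z| + i arg z` and
`arg (x + iy) = π/2 - arctan (x/y)`. Since `F_k` is holomorphic there, restricting to a horizontal
and to a vertical line gives second derivatives `Re F_k''` and `Re (i² F_k'')`, which cancel.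
-/

open Real Complex

theorem arg_ofReal_add_ofReal_mul_I {x y : ℝ} (hy : 0 < y) :
    arg (x + y * I) = π / 2 - Real.arctan (x / y) := by
  have hnorm : ‖(x : ℂ) + y * I‖ = √(x ^ 2 + y ^ 2) := norm_add_mul_I x y
  have hsqrt : √(1 + (x / y) ^ 2) = √(x ^ 2 + y ^ 2) / y := by
    rw [show 1 + (x / y) ^ 2 = (x ^ 2 + y ^ 2) / y ^ 2 by field_simp; ring,
      sqrt_div' _ (sq_nonneg y), sqrt_sq hy.le]
  have hpos : 0 < √(x ^ 2 + y ^ 2) := sqrt_pos.2 (by positivity)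
  rw [arg_of_im_pos (by simpa using hy), arccos_eq_pi_div_two_sub_arcsin, arctan_eq_arcsin,
    hsqrt, hnorm]
  congr 2
  simp only [add_re, ofReal_re, mul_re, I_re, mul_zero, ofReal_im, I_im, mul_one, sub_self,
    add_zero]
  field_simp

section LineRestriction

variable {F : ℂ → ℂ} {a v : ℂ} {t : ℝ}

theorem hasDerivAt_re_comp_line (hF : DifferentiableAt ℂ F (a + t * v)) :
    HasDerivAt (fun s : ℝ => (F (a + s * v)).re) (v * deriv F (a + t * v)).re t := by
  have hline : HasDerivAt (fun w : ℂ => a + w * v) v t := by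
    simpa using ((hasDerivAt_id (t : ℂ)).mul_const v).const_add a
  simpa [mul_comm] using (hF.hasDerivAt.comp (t : ℂ) hline).real_of_complex

theorem iteratedDeriv_two_re_comp_line {U : Set ℂ} (hU : IsOpen U) (hF : DifferentiableOn ℂ F U)
    (ht : a + t * v ∈ U) :
    iteratedDeriv 2 (fun s : ℝ => (F (a + s * v)).re) t
      = (v ^ 2 * deriv (deriv F) (a + t * v)).re := by
  have hF' : DifferentiableOn ℂ (deriv F) U := (hF.analyticOnNhd hU).deriv.differentiableOn
  have hderiv : deriv (fun s : ℝ => (F (a + s * v)).re)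
      =ᶠ[nhds t] fun s => (v * deriv F (a + s * v)).re := by
    have hline : IsOpen {s : ℝ | a + s * v ∈ U} := hU.preimage (by fun_prop)
    filter_upwards [hline.mem_nhds ht] with s hs
    exact (hasDerivAt_re_comp_line (hF.differentiableAt (hU.mem_nhds hs))).deriv
  have hderiv2 := hasDerivAt_re_comp_line (F := fun w => v * deriv F w)
    ((hF'.differentiableAt (hU.mem_nhds ht)).const_mul v)
  rw [iteratedDeriv_succ, iteratedDeriv_one, hderiv.deriv_eq, hderiv2.deriv,
    deriv_const_mul _ (hF'.differentiableAt (hU.mem_nhds ht))]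
  ring_nf

end LineRestriction

theorem DifferentiableOn.iteratedDeriv_two_re_horizontal_add_vertical_eq_zero {F : ℂ → ℂ}
    {U : Set ℂ} (hU : IsOpen U) (hF : DifferentiableOn ℂ F U) {x y : ℝ}
    (hz : (x : ℂ) + y * I ∈ U) :
    iteratedDeriv 2 (fun t : ℝ => (F (t + y * I)).re) x
      + iteratedDeriv 2 (fun t : ℝ => (F (x + t * I)).re) y = 0 := by
  have horizontal := iteratedDeriv_two_re_comp_line hU hF (a := y * I) (v := 1) (t := x)
    (by rwa [mul_one, add_comm])
  have vertical := iteratedDeriv_two_re_comp_line hU hF (a := x) (v := I) (t := y) hz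
  simp only [mul_one, add_comm (y * I : ℂ)] at horizontal
  rw [horizontal, vertical, I_sq]
  simp

noncomputable def u (k : ℕ) (x y : ℝ) : ℝ :=
  (Real.arctan (x / y) / π + 1 / 2) * (((x : ℂ) + y * I) ^ k).re
    - (1 / π) * Real.log (√(x ^ 2 + y ^ 2)) * (((x : ℂ) + y * I) ^ k).im

noncomputable def holomorphicU (k : ℕ) (z : ℂ) : ℂ := z ^ k * (1 + I / π * Complex.log z)

theorem re_holomorphicU {k : ℕ} {x y : ℝ} (hy : 0 < y) :
    (holomorphicU k (x + y * I)).re = u k x y := by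
  have hlog : Complex.log (x + y * I)
      = Real.log (√(x ^ 2 + y ^ 2)) + (π / 2 - Real.arctan (x / y) : ℝ) * I := by
    rw [Complex.log, norm_add_mul_I, arg_ofReal_add_ofReal_mul_I hy]
  have hfactor : 1 + I / π * Complex.log (x + y * I)
      = ((Real.arctan (x / y) / π + 1 / 2 : ℝ) : ℂ)
        + ((Real.log (√(x ^ 2 + y ^ 2)) / π : ℝ) : ℂ) * I := by
    rw [hlog]
    simp only [ofReal_add, ofReal_sub, ofReal_div, ofReal_one, ofReal_ofNat]
    field_simp
    linear_combination (π - 2 * Real.arctan (x / y) : ℂ) * I_sq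
  rw [holomorphicU, hfactor, mul_add, add_re, re_mul_ofReal, mul_left_comm, re_ofReal_mul,
    mul_I_re, u]
  ring

theorem differentiableOn_holomorphicU (k : ℕ) :
    DifferentiableOn ℂ (holomorphicU k) {z : ℂ | 0 < z.im} := fun _ hz =>
  ((differentiableAt_pow k).mul ((differentiableAt_const _).add ((differentiableAt_const _).mul
    (Complex.differentiableAt_log (mem_slitPlane_iff.2 (Or.inr hz.ne')))))).differentiableWithinAt

/-- For k ∈ ℕ, u_k(x,y) = (arctan(x/y)/π + 1/2)·Re((x+iy)^k)
− (1/π)·log(√(x²+y²))·Im((x+iy)^k) is harmonic on the upper half-plane. -/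
theorem u_k_harmonic (k : ℕ) :
    ∀ x y : ℝ, 0 < y →
      iteratedDeriv 2 (fun t : ℝ =>
        (Real.arctan (t / y) / Real.pi + 1 / 2) * (((t : ℂ) + y * Complex.I) ^ k).re
        - (1 / Real.pi) * Real.log (Real.sqrt (t ^ 2 + y ^ 2))
            * (((t : ℂ) + y * Complex.I) ^ k).im) x
      + iteratedDeriv 2 (fun t : ℝ =>
        (Real.arctan (x / t) / Real.pi + 1 / 2) * (((x : ℂ) + t * Complex.I) ^ k).re
        - (1 / Real.pi) * Real.log (Real.sqrt (x ^ 2 + t ^ 2))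
            * (((x : ℂ) + t * Complex.I) ^ k).im) y
      = 0 := by
  intro x y hy
  show iteratedDeriv 2 (fun t => u k t y) x + iteratedDeriv 2 (fun t => u k x t) y = 0
  have horizontal : (fun t => u k t y) = fun t : ℝ => (holomorphicU k (t + y * I)).re :=
    funext fun t => (re_holomorphicU hy).symm
  have vertical : (fun t => u k x t) =ᶠ[nhds y] fun t : ℝ => (holomorphicU k (x + t * I)).re := by
    filter_upwards [lt_mem_nhds hy] with t ht using (re_holomorphicU ht).symm
  rw [horizontal, vertical.iteratedDeriv_eq]
  exact (differentiableOn_holomorphicU k).iteratedDeriv_two_re_horizontal_add_vertical_eq_zero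
    (isOpen_lt continuous_const continuous_im) (by simpa using hy)
end

section
/- For k ∈ ℕ, k ≥ 1, and x ≠ 0, the limit as y → 0⁺ of u_k(x,y) = (arctan(x/y)/π + 1/2)·Re((x+iy)^k) − (1/π)·log(√(x²+y²))·Im((x+iy)^k) equals max(x,0)^k. -/
open Real Complex Filter

/-- Boundary values of u_k: for x ≠ 0, u_k(x,y) → max(x,0)^k as y → 0⁺. -/
theorem u_k_boundary_values (k : ℕ) (hk : 1 ≤ k) (x : ℝ) (hx : x ≠ 0) :
    Tendsto (fun y : ℝ =>
      (Real.arctan (x / y) / Real.pi + 1 / 2) * (((x : ℂ) + y * Complex.I) ^ k).re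
      - (1 / Real.pi) * Real.log (Real.sqrt (x ^ 2 + y ^ 2))
          * (((x : ℂ) + y * Complex.I) ^ k).im)
    (nhdsWithin 0 (Set.Ioi 0)) (nhds (max x 0 ^ k)) := by
  have hπ : Real.pi ≠ 0 := Real.pi_ne_zero
  -- real part tends to x^k
  have hRe : Tendsto (fun y : ℝ => (((x : ℂ) + y * Complex.I) ^ k).re)
      (nhdsWithin 0 (Set.Ioi 0)) (nhds (x ^ k)) := by
    have hc : Continuous fun y : ℝ => (((x : ℂ) + y * Complex.I) ^ k).re := by
      continuity
    have h : Tendsto (fun y : ℝ => (((x : ℂ) + y * Complex.I) ^ k).re)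
        (nhdsWithin 0 (Set.Ioi 0)) (nhds ((((x : ℂ) + (0:ℝ) * Complex.I) ^ k).re)) :=
      (hc.tendsto 0).mono_left nhdsWithin_le_nhds
    simpa [← Complex.ofReal_pow] using h
  -- imaginary part tends to 0
  have hIm : Tendsto (fun y : ℝ => (((x : ℂ) + y * Complex.I) ^ k).im)
      (nhdsWithin 0 (Set.Ioi 0)) (nhds 0) := by
    have hc : Continuous fun y : ℝ => (((x : ℂ) + y * Complex.I) ^ k).im := by
      continuity
    have h : Tendsto (fun y : ℝ => (((x : ℂ) + y * Complex.I) ^ k).im)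
        (nhdsWithin 0 (Set.Ioi 0)) (nhds ((((x : ℂ) + (0:ℝ) * Complex.I) ^ k).im)) :=
      (hc.tendsto 0).mono_left nhdsWithin_le_nhds
    simpa [← Complex.ofReal_pow] using h
  -- log term tends to log |x|
  have hLog : Tendsto (fun y : ℝ => Real.log (Real.sqrt (x ^ 2 + y ^ 2)))
      (nhdsWithin 0 (Set.Ioi 0)) (nhds (Real.log |x|)) := by
    have hc : ContinuousAt (fun y : ℝ => Real.log (Real.sqrt (x ^ 2 + y ^ 2))) 0 := by
      apply ContinuousAt.log
      · fun_prop
      · simp [Real.sqrt_sq_eq_abs, abs_ne_zero, hx]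
    have h : Tendsto (fun y : ℝ => Real.log (Real.sqrt (x ^ 2 + y ^ 2)))
        (nhdsWithin 0 (Set.Ioi 0)) (nhds (Real.log (Real.sqrt (x ^ 2 + (0:ℝ) ^ 2)))) :=
      hc.tendsto.mono_left nhdsWithin_le_nhds
    simpa [Real.sqrt_sq_eq_abs] using h
  have hlogterm : Tendsto (fun y : ℝ =>
      (1 / Real.pi) * Real.log (Real.sqrt (x ^ 2 + y ^ 2))
        * (((x : ℂ) + y * Complex.I) ^ k).im)
      (nhdsWithin 0 (Set.Ioi 0)) (nhds 0) := by
    have := ((hLog.const_mul (1 / Real.pi)).mul hIm)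
    simpa using this
  rcases hx.lt_or_gt with hneg | hpos
  · -- x < 0 : arctan(x/y) → -π/2
    have hdiv : Tendsto (fun y : ℝ => x / y) (nhdsWithin 0 (Set.Ioi 0)) atBot := by
      simpa [div_eq_mul_inv] using tendsto_inv_nhdsGT_zero.const_mul_atTop_of_neg hneg
    have hArc : Tendsto (fun y : ℝ => Real.arctan (x / y)) (nhdsWithin 0 (Set.Ioi 0))
        (nhds (-(Real.pi / 2))) :=
      (Real.tendsto_arctan_atBot.mono_right nhdsWithin_le_nhds).comp hdiv
    have h1 : Tendsto (fun y : ℝ =>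
        (Real.arctan (x / y) / Real.pi + 1 / 2) * (((x : ℂ) + y * Complex.I) ^ k).re)
        (nhdsWithin 0 (Set.Ioi 0)) (nhds ((-(Real.pi / 2) / Real.pi + 1 / 2) * x ^ k)) :=
      (((hArc.div_const Real.pi).add tendsto_const_nhds).mul hRe)
    have := h1.sub hlogterm
    have hmax : max x 0 = 0 := max_eq_right hneg.le
    have hval : (-(Real.pi / 2) / Real.pi + 1 / 2) * x ^ k - 0 = max x 0 ^ k := by
      rw [hmax, zero_pow (Nat.one_le_iff_ne_zero.mp hk)]
      field_simp
      ring
    rwa [hval] at this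
  · -- x > 0 : arctan(x/y) → π/2
    have hdiv : Tendsto (fun y : ℝ => x / y) (nhdsWithin 0 (Set.Ioi 0)) atTop := by
      simpa [div_eq_mul_inv] using tendsto_inv_nhdsGT_zero.const_mul_atTop hpos
    have hArc : Tendsto (fun y : ℝ => Real.arctan (x / y)) (nhdsWithin 0 (Set.Ioi 0))
        (nhds (Real.pi / 2)) :=
      (Real.tendsto_arctan_atTop.mono_right nhdsWithin_le_nhds).comp hdiv
    have h1 : Tendsto (fun y : ℝ =>
        (Real.arctan (x / y) / Real.pi + 1 / 2) * (((x : ℂ) + y * Complex.I) ^ k).re)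
        (nhdsWithin 0 (Set.Ioi 0)) (nhds ((Real.pi / 2 / Real.pi + 1 / 2) * x ^ k)) :=
      (((hArc.div_const Real.pi).add tendsto_const_nhds).mul hRe)
    have := h1.sub hlogterm
    have hmax : max x 0 = x := max_eq_left hpos.le
    have hval : (Real.pi / 2 / Real.pi + 1 / 2) * x ^ k - 0 = max x 0 ^ k := by
      rw [hmax]
      field_simp
      ring
    rwa [hval] at this
end

section
/- Let g : ℝ → ℝ be a bounded continuous function. Then u(x,y) = (1/π) ∫_ℝ y·g(s)/((x−s)² + y²) ds defines a harmonic function on the upper half-plane with lim_{(x,y)→(x₀,0⁺)} u(x,y) = g(x₀) for each x₀ ∈ ℝ. -/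
/-!
Differentiating under the integral sign is justified by domination: for `(a', y')` within
`y / 2` of `(a, y)`, each first and second partial derivative of the kernel at `(a', y')` is at
most a constant (depending on `y`) times `(a ^ 2 + y ^ 2)⁻¹`, which is integrable in
`a = x - s`, and `g` is bounded. The kernel satisfies `∂²ᵧP = -∂²ₓP`, hence so does the Poisson
integral. For the boundary values, the substitution `s = x + y t` turns the integral into
`∫ g (x + y t) P(t, 1) dt`, and dominated convergence as `(x, y) → (x₀, 0)` gives
`g x₀ * ∫ P(t, 1) dt = g x₀`.
-/

open Real MeasureTheory Filter Metric Topology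

theorem hasDerivAt_integral_mul_of_deriv_le {g : ℝ → ℝ} {M : ℝ}
    (hg : AEStronglyMeasurable g) (hM : ∀ s, |g s| ≤ M)
    {k k' : ℝ → ℝ → ℝ} {B : ℝ → ℝ} {t₀ ε : ℝ} (hε : 0 < ε)
    (hk_meas : ∀ t, Measurable (k t)) (hk_int : Integrable (k t₀))
    (hk'_meas : Measurable (k' t₀))
    (hk : ∀ t ∈ ball t₀ ε, ∀ s, HasDerivAt (k · s) (k' t s) t)
    (hk'_le : ∀ t ∈ ball t₀ ε, ∀ s, |k' t s| ≤ B s) (hB : Integrable B) :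
    HasDerivAt (fun t => ∫ s, g s * k t s) (∫ s, g s * k' t₀ s) t₀ := by
  have hM₀ : 0 ≤ M := (abs_nonneg _).trans (hM 0)
  refine (hasDerivAt_integral_of_dominated_loc_of_deriv_le (bound := fun s => M * B s)
    (ball_mem_nhds t₀ hε) (Eventually.of_forall fun t => hg.mul (hk_meas t).aestronglyMeasurable)
    (hk_int.bdd_mul hg (ae_of_all _ hM)) (hg.mul hk'_meas.aestronglyMeasurable)
    (ae_of_all _ fun s t ht => ?_) (hB.const_mul M)
    (ae_of_all _ fun s t ht => (hk t ht s).const_mul (g s))).2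
  rw [norm_mul, Real.norm_eq_abs, Real.norm_eq_abs]
  exact mul_le_mul (hM s) (hk'_le t ht s) (abs_nonneg _) hM₀

theorem iteratedDeriv_two_eq_of_hasDerivAt {f f' : ℝ → ℝ} {x f'' : ℝ}
    (hf : ∀ᶠ t in 𝓝 x, HasDerivAt f (f' t) t) (hf' : HasDerivAt f' f'' x) :
    iteratedDeriv 2 f x = f'' := by
  rw [iteratedDeriv_succ, iteratedDeriv_one]
  exact (hf'.congr_of_eventuallyEq (hf.mono fun t ht => ht.deriv)).deriv

theorem tendsto_integral_comp_add_mul_mul {g φ : ℝ → ℝ} {M : ℝ} (hg : Continuous g)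
    (hM : ∀ s, |g s| ≤ M) (hφ : Integrable φ) (x₀ : ℝ) :
    Tendsto (fun p : ℝ × ℝ => ∫ t, g (p.1 + p.2 * t) * φ t) (𝓝 (x₀, 0))
      (𝓝 (g x₀ * ∫ t, φ t)) := by
  rw [← integral_const_mul]
  refine tendsto_integral_filter_of_dominated_convergence (fun t => M * ‖φ t‖)
    (Eventually.of_forall fun p => (hg.comp (by fun_prop)).aestronglyMeasurable.mul hφ.1)
    (Eventually.of_forall fun p => ae_of_all _ fun t => ?_) (hφ.norm.const_mul M)
    (ae_of_all _ fun t => ?_)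
  · rw [norm_mul, Real.norm_eq_abs]
    exact mul_le_mul_of_nonneg_right (hM _) (norm_nonneg _)
  · have : Continuous fun p : ℝ × ℝ => g (p.1 + p.2 * t) * φ t := by fun_prop
    simpa using this.tendsto (x₀, 0)

namespace HalfPlane

/- `poissonKernel (x - s) y` is the kernel `P(x, y; s)`; the next three definitions are its
partial derivatives `∂ₐ`, `∂ᵧ`, `∂ₐ²` in the variables `(a, y) = (x - s, y)`. -/
noncomputable def poissonKernel (a y : ℝ) : ℝ := y / (π * (a ^ 2 + y ^ 2))

noncomputable def poissonKernelDx (a y : ℝ) : ℝ := -2 * a * y / (π * (a ^ 2 + y ^ 2) ^ 2)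

noncomputable def poissonKernelDy (a y : ℝ) : ℝ := (a ^ 2 - y ^ 2) / (π * (a ^ 2 + y ^ 2) ^ 2)

noncomputable def poissonKernelDxx (a y : ℝ) : ℝ :=
  2 * y * (3 * a ^ 2 - y ^ 2) / (π * (a ^ 2 + y ^ 2) ^ 3)

noncomputable def poissonIntegral (g : ℝ → ℝ) (x y : ℝ) : ℝ :=
  ∫ s, g s * poissonKernel (x - s) y

variable {a y : ℝ}

theorem hasDerivAt_poissonKernel_fst (hy : y ≠ 0) :
    HasDerivAt (poissonKernel · y) (poissonKernelDx a y) a := by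
  have hD := ((hasDerivAt_pow 2 a).add_const (y ^ 2)).const_mul π
  refine ((hasDerivAt_const a y).div hD (by positivity)).congr_deriv ?_
  unfold poissonKernelDx
  field_simp
  ring

theorem hasDerivAt_poissonKernelDx_fst (hy : y ≠ 0) :
    HasDerivAt (poissonKernelDx · y) (poissonKernelDxx a y) a := by
  have hN := ((hasDerivAt_id' a).const_mul (-2)).mul_const y
  have hD := (((hasDerivAt_pow 2 a).add_const (y ^ 2)).fun_pow 2).const_mul π
  refine (hN.div hD (by positivity)).congr_deriv ?_
  unfold poissonKernelDxx
  field_simp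
  ring

theorem hasDerivAt_poissonKernel_snd (hy : y ≠ 0) :
    HasDerivAt (poissonKernel a ·) (poissonKernelDy a y) y := by
  have hD := ((hasDerivAt_pow 2 y).const_add (a ^ 2)).const_mul π
  refine ((hasDerivAt_id' y).div hD (by positivity)).congr_deriv ?_
  unfold poissonKernelDy
  field_simp
  ring

theorem hasDerivAt_poissonKernelDy_snd (hy : y ≠ 0) :
    HasDerivAt (poissonKernelDy a ·) (-poissonKernelDxx a y) y := by
  have hN := (hasDerivAt_pow 2 y).const_sub (a ^ 2)
  have hD := (((hasDerivAt_pow 2 y).const_add (a ^ 2)).fun_pow 2).const_mul π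
  refine (hN.div hD (by positivity)).congr_deriv ?_
  unfold poissonKernelDxx
  field_simp
  ring

theorem inv_sq_add_sq_le_of_near {a' y' : ℝ} (hy : 0 < y) (ha : |a' - a| < y / 2)
    (hy' : |y' - y| < y / 2) : (a' ^ 2 + y' ^ 2)⁻¹ ≤ 6 * (a ^ 2 + y ^ 2)⁻¹ := by
  obtain ⟨ha₁, ha₂⟩ := abs_lt.mp ha
  obtain ⟨hy₁, hy₂⟩ := abs_lt.mp hy'
  have hy'₀ : 0 < y' := by linarith
  rw [← div_eq_mul_inv, inv_le_comm₀ (by positivity) (by positivity), inv_div,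
    div_le_iff₀ (by norm_num)]
  nlinarith [sq_nonneg (a - 2 * a')]

theorem half_lt_of_mem_ball {t : ℝ} (ht : t ∈ ball y (y / 2)) : y / 2 < t := by
  rw [mem_ball, Real.dist_eq, abs_lt] at ht
  linarith

theorem abs_div_pi_mul_sq_le {N D : ℝ} (hD : 0 < D) (hN : |N| ≤ D) :
    |N / (π * D ^ 2)| ≤ π⁻¹ * D⁻¹ := by
  rw [abs_div, abs_of_pos (by positivity : 0 < π * D ^ 2), div_le_iff₀ (by positivity)]
  rwa [show π⁻¹ * D⁻¹ * (π * D ^ 2) = D by field_simp]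

theorem abs_poissonKernelDx_le (a : ℝ) (hy : y ≠ 0) :
    |poissonKernelDx a y| ≤ π⁻¹ * (a ^ 2 + y ^ 2)⁻¹ :=
  abs_div_pi_mul_sq_le (by positivity) <| abs_le.2
    ⟨by nlinarith [sq_nonneg (a - y)], by nlinarith [sq_nonneg (a + y)]⟩

theorem abs_poissonKernelDy_le (a : ℝ) (hy : y ≠ 0) :
    |poissonKernelDy a y| ≤ π⁻¹ * (a ^ 2 + y ^ 2)⁻¹ :=
  abs_div_pi_mul_sq_le (by positivity) <| abs_le.2
    ⟨by nlinarith [sq_nonneg a], by nlinarith [sq_nonneg y]⟩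

theorem abs_poissonKernelDxx_le (a : ℝ) (hy : 0 < y) :
    |poissonKernelDxx a y| ≤ 6 * π⁻¹ * y⁻¹ * (a ^ 2 + y ^ 2)⁻¹ := by
  have h : |3 * a ^ 2 - y ^ 2| ≤ 3 * (a ^ 2 + y ^ 2) := by
    rw [abs_le]
    constructor <;> nlinarith [sq_nonneg a, sq_nonneg y]
  rw [poissonKernelDxx, abs_div, abs_of_pos (by positivity : 0 < π * (a ^ 2 + y ^ 2) ^ 3),
    div_le_iff₀ (by positivity), abs_mul, abs_of_pos (by positivity : 0 < 2 * y)]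
  have : 6 * π⁻¹ * y⁻¹ * (a ^ 2 + y ^ 2)⁻¹ * (π * (a ^ 2 + y ^ 2) ^ 3)
      = 6 * (a ^ 2 + y ^ 2) ^ 2 / y := by
    field_simp
  rw [this, le_div_iff₀ hy]
  nlinarith [mul_le_mul_of_nonneg_left h (by positivity : 0 ≤ 2 * y ^ 2), sq_nonneg a]

theorem integrable_inv_sq_add_sq (hy : y ≠ 0) :
    Integrable fun a : ℝ => (a ^ 2 + y ^ 2)⁻¹ := by
  refine ((integrable_inv_one_add_sq.comp_div hy).const_mul (y ^ 2)⁻¹).congr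
    (ae_of_all _ fun a => ?_)
  field_simp
  ring

theorem integrable_poissonKernel (hy : y ≠ 0) : Integrable (poissonKernel · y) :=
  ((integrable_inv_sq_add_sq hy).const_mul (y / π)).congr
    (ae_of_all _ fun a => by simp only [poissonKernel]; field_simp)

theorem integrable_poissonKernelDx (hy : y ≠ 0) : Integrable (poissonKernelDx · y) :=
  ((integrable_inv_sq_add_sq hy).const_mul π⁻¹).mono'
    (by unfold poissonKernelDx; fun_prop : Measurable _).aestronglyMeasurable
    (ae_of_all _ fun a => abs_poissonKernelDx_le a hy)

theorem integrable_poissonKernelDy (hy : y ≠ 0) : Integrable (poissonKernelDy · y) :=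
  ((integrable_inv_sq_add_sq hy).const_mul π⁻¹).mono'
    (by unfold poissonKernelDy; fun_prop : Measurable _).aestronglyMeasurable
    (ae_of_all _ fun a => abs_poissonKernelDy_le a hy)

variable {g : ℝ → ℝ} {M : ℝ}

theorem hasDerivAt_poissonIntegral_fst (hg : AEStronglyMeasurable g) (hM : ∀ s, |g s| ≤ M)
    (x : ℝ) (hy : 0 < y) :
    HasDerivAt (fun t => poissonIntegral g t y) (∫ s, g s * poissonKernelDx (x - s) y) x := by
  refine hasDerivAt_integral_mul_of_deriv_le hg hM (half_pos hy)
    (fun t => by unfold poissonKernel; fun_prop)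
    ((integrable_poissonKernel hy.ne').comp_sub_left x) (by unfold poissonKernelDx; fun_prop)
    (fun t _ s => (hasDerivAt_poissonKernel_fst hy.ne').comp_sub_const t s)
    (fun t ht s => (abs_poissonKernelDx_le _ hy.ne').trans ?_)
    ((((integrable_inv_sq_add_sq hy.ne').comp_sub_left x).const_mul 6).const_mul π⁻¹)
  gcongr
  exact inv_sq_add_sq_le_of_near hy (by rwa [sub_sub_sub_cancel_right, ← Real.dist_eq])
    (by simpa using half_pos hy)

theorem hasDerivAt_integral_poissonKernelDx_fst (hg : AEStronglyMeasurable g)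
    (hM : ∀ s, |g s| ≤ M) (x : ℝ) (hy : 0 < y) :
    HasDerivAt (fun t => ∫ s, g s * poissonKernelDx (t - s) y)
      (∫ s, g s * poissonKernelDxx (x - s) y) x := by
  refine hasDerivAt_integral_mul_of_deriv_le hg hM (half_pos hy)
    (fun t => by unfold poissonKernelDx; fun_prop)
    ((integrable_poissonKernelDx hy.ne').comp_sub_left x) (by unfold poissonKernelDxx; fun_prop)
    (fun t _ s => (hasDerivAt_poissonKernelDx_fst hy.ne').comp_sub_const t s)
    (fun t ht s => (abs_poissonKernelDxx_le _ hy).trans ?_)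
    ((((integrable_inv_sq_add_sq hy.ne').comp_sub_left x).const_mul 6).const_mul
      (6 * π⁻¹ * y⁻¹))
  gcongr
  exact inv_sq_add_sq_le_of_near hy (by rwa [sub_sub_sub_cancel_right, ← Real.dist_eq])
    (by simpa using half_pos hy)

theorem hasDerivAt_poissonIntegral_snd (hg : AEStronglyMeasurable g) (hM : ∀ s, |g s| ≤ M)
    (x : ℝ) (hy : 0 < y) :
    HasDerivAt (fun t => poissonIntegral g x t) (∫ s, g s * poissonKernelDy (x - s) y) y := by
  have hpos : ∀ t ∈ ball y (y / 2), 0 < t := fun t ht =>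
    (half_pos hy).trans (half_lt_of_mem_ball ht)
  refine hasDerivAt_integral_mul_of_deriv_le hg hM (half_pos hy)
    (fun t => by unfold poissonKernel; fun_prop)
    ((integrable_poissonKernel hy.ne').comp_sub_left x) (by unfold poissonKernelDy; fun_prop)
    (fun t ht s => hasDerivAt_poissonKernel_snd (hpos t ht).ne')
    (fun t ht s => (abs_poissonKernelDy_le _ (hpos t ht).ne').trans ?_)
    ((((integrable_inv_sq_add_sq hy.ne').comp_sub_left x).const_mul 6).const_mul π⁻¹)
  gcongr
  exact inv_sq_add_sq_le_of_near hy (by simpa using half_pos hy) ht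

theorem hasDerivAt_integral_poissonKernelDy_snd (hg : AEStronglyMeasurable g)
    (hM : ∀ s, |g s| ≤ M) (x : ℝ) (hy : 0 < y) :
    HasDerivAt (fun t => ∫ s, g s * poissonKernelDy (x - s) t)
      (-∫ s, g s * poissonKernelDxx (x - s) y) y := by
  have hpos : ∀ t ∈ ball y (y / 2), 0 < t := fun t ht =>
    (half_pos hy).trans (half_lt_of_mem_ball ht)
  rw [← integral_neg]
  simp_rw [← mul_neg]
  refine hasDerivAt_integral_mul_of_deriv_le hg hM (half_pos hy)
    (fun t => by unfold poissonKernelDy; fun_prop)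
    ((integrable_poissonKernelDy hy.ne').comp_sub_left x) (by unfold poissonKernelDxx; fun_prop)
    (fun t ht s => hasDerivAt_poissonKernelDy_snd (hpos t ht).ne')
    (fun t ht s => (abs_neg _).trans_le ((abs_poissonKernelDxx_le _ (hpos t ht)).trans ?_))
    ((((integrable_inv_sq_add_sq hy.ne').comp_sub_left x).const_mul 6).const_mul
      (6 * π⁻¹ * (2 * y⁻¹)))
  have ht' : t⁻¹ ≤ 2 * y⁻¹ := by
    calc t⁻¹ ≤ (y / 2)⁻¹ := inv_anti₀ (half_pos hy) (half_lt_of_mem_ball ht).le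
      _ = 2 * y⁻¹ := by ring
  gcongr
  exact inv_sq_add_sq_le_of_near hy (by simpa using half_pos hy) ht

theorem poissonIntegral_laplacian_eq_zero (hg : AEStronglyMeasurable g) (hM : ∀ s, |g s| ≤ M)
    (x : ℝ) (hy : 0 < y) :
    iteratedDeriv 2 (fun t => poissonIntegral g t y) x
      + iteratedDeriv 2 (fun t => poissonIntegral g x t) y = 0 := by
  rw [iteratedDeriv_two_eq_of_hasDerivAt
      (Eventually.of_forall fun t => hasDerivAt_poissonIntegral_fst hg hM t hy)
      (hasDerivAt_integral_poissonKernelDx_fst hg hM x hy),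
    iteratedDeriv_two_eq_of_hasDerivAt
      ((eventually_gt_nhds hy).mono fun t ht => hasDerivAt_poissonIntegral_snd hg hM x ht)
      (hasDerivAt_integral_poissonKernelDy_snd hg hM x hy),
    add_neg_cancel]

theorem poissonIntegral_eq_integral_comp (g : ℝ → ℝ) (x : ℝ) (hy : 0 < y) :
    poissonIntegral g x y = ∫ t, g (x + y * t) * poissonKernel t 1 := by
  let G s := g s * poissonKernel (x - s) y
  calc poissonIntegral g x y = ∫ u, G (x + u) := (integral_add_left_eq_self x (f := G)).symm
    _ = y * ∫ t, G (x + y * t) := by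
      rw [Measure.integral_comp_mul_left (fun u => G (x + u)), abs_of_pos (inv_pos.2 hy),
        smul_eq_mul, ← mul_assoc, mul_inv_cancel₀ hy.ne', one_mul]
    _ = ∫ t, g (x + y * t) * poissonKernel t 1 := by
      rw [← integral_const_mul]
      congr 1 with t
      simp only [G, poissonKernel]
      field_simp
      ring

theorem integral_poissonKernel_one : ∫ t, poissonKernel t 1 = 1 := by
  simp_rw [poissonKernel, one_pow, div_eq_mul_inv, one_mul, mul_inv, add_comm _ (1 : ℝ)]
  rw [integral_const_mul, integral_univ_inv_one_add_sq, inv_mul_cancel₀ pi_ne_zero]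

theorem tendsto_poissonIntegral (hg : Continuous g) (hM : ∀ s, |g s| ≤ M) (x₀ : ℝ) :
    Tendsto (fun p : ℝ × ℝ => poissonIntegral g p.1 p.2)
      (𝓝[{p | 0 < p.2}] (x₀, 0)) (𝓝 (g x₀)) := by
  have h := tendsto_integral_comp_add_mul_mul hg hM (integrable_poissonKernel one_ne_zero) x₀
  rw [integral_poissonKernel_one, mul_one] at h
  exact (h.mono_left nhdsWithin_le_nhds).congr' (eventually_nhdsWithin_of_forall fun p hp =>
    (poissonIntegral_eq_integral_comp g p.1 hp).symm)

theorem one_div_pi_mul_integral_eq_poissonIntegral (g : ℝ → ℝ) (x y : ℝ) :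
    1 / π * ∫ s, y * g s / ((x - s) ^ 2 + y ^ 2) = poissonIntegral g x y := by
  rw [poissonIntegral, ← integral_const_mul]
  congr 1 with s
  simp only [poissonKernel, div_eq_mul_inv, mul_inv]
  ring

end HalfPlane

/-- The Poisson kernel representation: for bounded continuous g, the Poisson
integral is harmonic on the upper half-plane and attains the boundary values g. -/
theorem poisson_kernel_representation
    (g : ℝ → ℝ) (hg : Continuous g) (M : ℝ) (hM : ∀ t : ℝ, |g t| ≤ M) :
    (∀ x y : ℝ, 0 < y →
      iteratedDeriv 2 (fun t : ℝ =>
        (1 / Real.pi) * ∫ s : ℝ, y * g s / ((t - s) ^ 2 + y ^ 2)) x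
      + iteratedDeriv 2 (fun t : ℝ =>
        (1 / Real.pi) * ∫ s : ℝ, t * g s / ((x - s) ^ 2 + t ^ 2)) y = 0) ∧
    (∀ x₀ : ℝ, Tendsto (fun p : ℝ × ℝ =>
        (1 / Real.pi) * ∫ s : ℝ, p.2 * g s / ((p.1 - s) ^ 2 + p.2 ^ 2))
      (nhdsWithin (x₀, 0) {p : ℝ × ℝ | 0 < p.2}) (nhds (g x₀))) := by
  simp only [HalfPlane.one_div_pi_mul_integral_eq_poissonIntegral]
  exact ⟨fun x y hy =>
    HalfPlane.poissonIntegral_laplacian_eq_zero hg.aestronglyMeasurable hM x hy,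
    HalfPlane.tendsto_poissonIntegral hg hM⟩
end
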